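/- Let X = (ℤ/2ℤ)⁴ and define a 4-coloured graph γ on X by setting, for distinct x, y ∈ X: γ({x,y}) = 1 if x + y = (1,0,0,0); γ({x,y}) = 2 if x + y ∈ {(0,1,0,0), (1,0,1,0)}; γ({x,y}) = 3 if x + y ∈ {(0,0,1,0), (0,0,0,1)}; and γ({x,y}) = 0 otherwise. Then Aut(γ) = { t_g : g ∈ (ℤ/2ℤ)⁴ }, the group of all translations t_g : x ↦ x + g of (ℤ/2ℤ)⁴. -/
import Mathlib


/-- `A` is precisely the automorphism group of the `k`-coloured graph `γ` on `X`. -/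
def IsColGraphAutGroup {X : Type*} {k : ℕ} (γ : Sym2 X → Fin k)
    (A : Subgroup (Equiv.Perm X)) : Prop :=
  ∀ σ : Equiv.Perm X, σ ∈ A ↔ ∀ x y : X, x ≠ y → γ s(σ x, σ y) = γ s(x, y)

/-- The regular permutation group of a finite abelian group `G`: the subgroup of
`Sym(G)` consisting of all translations `t_g : x ↦ x + g`. -/
def translations (G : Type*) [AddCommGroup G] : Subgroup (Equiv.Perm G) where
  carrier := {σ | ∃ g : G, σ = Equiv.addRight g}
  one_mem' := ⟨0, by ext x; simp⟩
  mul_mem' := by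
    rintro σ τ ⟨g, rfl⟩ ⟨h, rfl⟩
    exact ⟨h + g, by ext x; simp [add_assoc]⟩
  inv_mem' := by
    rintro σ ⟨g, rfl⟩
    exact ⟨-g, by ext x; simp⟩

/-- The 4-coloured graph on `(ℤ/2ℤ)⁴` colouring `{x,y}` by `1` if `x + y = (1,0,0,0)`,
by `2` if `x + y ∈ {(0,1,0,0), (1,0,1,0)}`, by `3` if `x + y ∈ {(0,0,1,0), (0,0,0,1)}`,
and by `0` otherwise. -/
def gamma17 : Sym2 (ZMod 2 × ZMod 2 × ZMod 2 × ZMod 2) → Fin 4 :=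
  Sym2.lift ⟨fun x y =>
    if x + y = ((1 : ZMod 2), (0 : ZMod 2), (0 : ZMod 2), (0 : ZMod 2)) then 1
    else if x + y = ((0 : ZMod 2), (1 : ZMod 2), (0 : ZMod 2), (0 : ZMod 2)) ∨
        x + y = ((1 : ZMod 2), (0 : ZMod 2), (1 : ZMod 2), (0 : ZMod 2)) then 2
    else if x + y = ((0 : ZMod 2), (0 : ZMod 2), (1 : ZMod 2), (0 : ZMod 2)) ∨
        x + y = ((0 : ZMod 2), (0 : ZMod 2), (0 : ZMod 2), (1 : ZMod 2)) then 3
    else 0,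
    fun x y => by dsimp only; rw [add_comm]⟩

namespace Stmt17Aux

abbrev G17 : Type := ZMod 2 × ZMod 2 × ZMod 2 × ZMod 2

def c17 : G17 → Fin 4 := fun d =>
    if d = ((1 : ZMod 2), (0 : ZMod 2), (0 : ZMod 2), (0 : ZMod 2)) then 1
    else if d = ((0 : ZMod 2), (1 : ZMod 2), (0 : ZMod 2), (0 : ZMod 2)) ∨
        d = ((1 : ZMod 2), (0 : ZMod 2), (1 : ZMod 2), (0 : ZMod 2)) then 2
    else if d = ((0 : ZMod 2), (0 : ZMod 2), (1 : ZMod 2), (0 : ZMod 2)) ∨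
        d = ((0 : ZMod 2), (0 : ZMod 2), (0 : ZMod 2), (1 : ZMod 2)) then 3
    else 0

def E1 : G17 := (1, 0, 0, 0)
def E2 : G17 := (0, 1, 0, 0)
def E3 : G17 := (0, 0, 1, 0)
def E4 : G17 := (0, 0, 0, 1)

lemma D1 : ∀ d : G17, c17 d = 1 → d = E1 := by decide
lemma D2 : ∀ d : G17, c17 d = 2 → d = E2 ∨ d = E1 + E3 := by decide
lemma D3 : ∀ d : G17, c17 d = 3 → d = E3 ∨ d = E4 := by decide

lemma solve17 : ∀ a b c : G17, a + b = c → b = a + c := by decide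
lemma solve17' : ∀ a b c : G17, a + b = c → a = c + b := by decide

theorem key17 (f : G17 → G17) (hinj : Function.Injective f) (h0 : f 0 = 0)
    (hc : ∀ x y : G17, x ≠ y → c17 (f x + f y) = c17 (x + y)) : ∀ x : G17, f x = x := by
  have ne1 : ∀ x : G17, x ≠ x + E1 := by decide
  have ne2 : ∀ x : G17, x ≠ x + E2 := by decide
  have ne3 : ∀ x : G17, x ≠ x + E3 := by decide
  have ne4 : ∀ x : G17, x ≠ x + E4 := by decide
  have ne13 : ∀ x : G17, x ≠ x + E1 + E3 := by decide
  have s1 : ∀ x : G17, x + (x + E1) = E1 := by decide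
  have s2 : ∀ x : G17, x + (x + E2) = E2 := by decide
  have s3 : ∀ x : G17, x + (x + E3) = E3 := by decide
  have s4 : ∀ x : G17, x + (x + E4) = E4 := by decide
  have s13 : ∀ x : G17, x + (x + E1 + E3) = E1 + E3 := by decide
  -- L1 : translation by E1 is respected
  have L1 : ∀ x : G17, f (x + E1) = f x + E1 := by
    intro x
    have h := hc x (x + E1) (ne1 x)
    rw [s1 x] at h
    exact solve17 _ _ _ (D1 _ (h.trans (by decide)))
  -- L2 : translation by E2 is respected
  have L2 : ∀ x : G17, f (x + E2) = f x + E2 := by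
    intro x
    have h := hc x (x + E2) (ne2 x)
    rw [s2 x] at h
    rcases D2 _ (h.trans (by decide)) with hg | hb
    · exact solve17 _ _ _ hg
    · exfalso
      have hy : f (x + E2) = f x + (E1 + E3) := solve17 _ _ _ hb
      have hy1 : f (x + E2 + E1) = f x + E3 := by
        have h' := L1 (x + E2)
        rw [hy] at h'
        rw [h']
        exact (show ∀ a : G17, a + (E1 + E3) + E1 = a + E3 from by decide) (f x)
      set y := x + E2 + E1 with hydef
      have hz1 := hc y (y + E3) (ne3 y)
      have hz2 := hc y (y + E4) (ne4 y)
      rw [s3 y] at hz1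
      rw [s4 y] at hz2
      have hz1' := D3 _ (hz1.trans (by decide))
      have hz2' := D3 _ (hz2.trans (by decide))
      have neyx3 : y + E3 ≠ x := by
        rw [hydef]; exact (show ∀ x : G17, x + E2 + E1 + E3 ≠ x from by decide) x
      have neyx4 : y + E4 ≠ x := by
        rw [hydef]; exact (show ∀ x : G17, x + E2 + E1 + E4 ≠ x from by decide) x
      have ne34 : y + E3 ≠ y + E4 :=
        (show ∀ y : G17, y + E3 ≠ y + E4 from by decide) y
      rcases hz1' with h1 | h1
      · -- f y + f (y+E3) = E3 ⇒ f (y+E3) = f x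
        have : f (y + E3) = f x := by
          have h'' := solve17 _ _ _ h1
          rw [hy1] at h''
          rw [h'']
          exact (show ∀ a : G17, a + E3 + E3 = a from by decide) (f x)
        exact neyx3 (hinj this)
      rcases hz2' with h2 | h2
      · have : f (y + E4) = f x := by
          have h'' := solve17 _ _ _ h2
          rw [hy1] at h''
          rw [h'']
          exact (show ∀ a : G17, a + E3 + E3 = a from by decide) (f x)
        exact neyx4 (hinj this)
      · -- both equal f y + E4
        have e1' : f (y + E3) = f y + E4 := solve17 _ _ _ h1
        have e2' : f (y + E4) = f y + E4 := solve17 _ _ _ h2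
        exact ne34 (hinj (e1'.trans e2'.symm))
  -- L13 : translation by E1+E3
  have L13 : ∀ x : G17, f (x + E1 + E3) = f x + E1 + E3 := by
    intro x
    have h := hc x (x + E1 + E3) (ne13 x)
    rw [s13 x] at h
    rcases D2 _ (h.trans (by decide)) with hb | hg
    · exfalso
      have : f (x + E1 + E3) = f (x + E2) := by
        rw [L2 x]; exact solve17 _ _ _ hb
      exact (show ∀ x : G17, x + E1 + E3 ≠ x + E2 from by decide) x (hinj this)
    · have := solve17 _ _ _ hg
      rw [this]
      exact (show ∀ a : G17, a + (E1 + E3) = a + E1 + E3 from by decide) (f x)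
  -- L3 : translation by E3
  have L3 : ∀ x : G17, f (x + E3) = f x + E3 := by
    intro x
    have h := L1 (x + E3)
    rw [(show ∀ x : G17, x + E3 + E1 = x + E1 + E3 from by decide) x, L13 x] at h
    exact ((show ∀ a b : G17, a + E1 + E3 = b + E1 → b = a + E3 from by decide) _ _ h)
  -- L4 : translation by E4
  have L4 : ∀ x : G17, f (x + E4) = f x + E4 := by
    intro x
    have h := hc x (x + E4) (ne4 x)
    rw [s4 x] at h
    rcases D3 _ (h.trans (by decide)) with hb | hg
    · exfalso
      have : f (x + E4) = f (x + E3) := by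
        rw [L3 x]; exact solve17 _ _ _ hb
      exact (show ∀ x : G17, x + E4 ≠ x + E3 from by decide) x (hinj this)
    · exact solve17 _ _ _ hg
  -- now build the table of all 16 values
  have step : ∀ (E : G17), (∀ x : G17, f (x + E) = f x + E) →
      ∀ (v w : G17), f v = v → v + E = w → f w = w := by
    intro E hE v w hv hw
    have := hE v
    rw [hv, hw] at this
    exact this
  have h0' : f ((0 : ZMod 2), (0 : ZMod 2), (0 : ZMod 2), (0 : ZMod 2))
      = ((0 : ZMod 2), (0 : ZMod 2), (0 : ZMod 2), (0 : ZMod 2)) := h0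
  have h1000 := step E1 L1 _ ((1 : ZMod 2), (0 : ZMod 2), (0 : ZMod 2), (0 : ZMod 2)) h0' (by decide)
  have h0100 := step E2 L2 _ ((0 : ZMod 2), (1 : ZMod 2), (0 : ZMod 2), (0 : ZMod 2)) h0' (by decide)
  have h0010 := step E3 L3 _ ((0 : ZMod 2), (0 : ZMod 2), (1 : ZMod 2), (0 : ZMod 2)) h0' (by decide)
  have h0001 := step E4 L4 _ ((0 : ZMod 2), (0 : ZMod 2), (0 : ZMod 2), (1 : ZMod 2)) h0' (by decide)
  have h1100 := step E1 L1 _ ((1 : ZMod 2), (1 : ZMod 2), (0 : ZMod 2), (0 : ZMod 2)) h0100 (by decide)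
  have h1010 := step E1 L1 _ ((1 : ZMod 2), (0 : ZMod 2), (1 : ZMod 2), (0 : ZMod 2)) h0010 (by decide)
  have h1001 := step E1 L1 _ ((1 : ZMod 2), (0 : ZMod 2), (0 : ZMod 2), (1 : ZMod 2)) h0001 (by decide)
  have h0110 := step E2 L2 _ ((0 : ZMod 2), (1 : ZMod 2), (1 : ZMod 2), (0 : ZMod 2)) h0010 (by decide)
  have h0101 := step E2 L2 _ ((0 : ZMod 2), (1 : ZMod 2), (0 : ZMod 2), (1 : ZMod 2)) h0001 (by decide)
  have h0011 := step E3 L3 _ ((0 : ZMod 2), (0 : ZMod 2), (1 : ZMod 2), (1 : ZMod 2)) h0001 (by decide)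
  have h1110 := step E1 L1 _ ((1 : ZMod 2), (1 : ZMod 2), (1 : ZMod 2), (0 : ZMod 2)) h0110 (by decide)
  have h1101 := step E1 L1 _ ((1 : ZMod 2), (1 : ZMod 2), (0 : ZMod 2), (1 : ZMod 2)) h0101 (by decide)
  have h1011 := step E1 L1 _ ((1 : ZMod 2), (0 : ZMod 2), (1 : ZMod 2), (1 : ZMod 2)) h0011 (by decide)
  have h0111 := step E2 L2 _ ((0 : ZMod 2), (1 : ZMod 2), (1 : ZMod 2), (1 : ZMod 2)) h0011 (by decide)
  have h1111 := step E1 L1 _ ((1 : ZMod 2), (1 : ZMod 2), (1 : ZMod 2), (1 : ZMod 2)) h0111 (by decide)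
  have two : ∀ z : ZMod 2, z = 0 ∨ z = 1 := by decide
  rintro ⟨a, b, c, d⟩
  rcases two a with rfl | rfl <;> rcases two b with rfl | rfl <;>
    rcases two c with rfl | rfl <;> rcases two d with rfl | rfl <;> assumption

end Stmt17Aux

/-- The automorphism group of the above 4-coloured graph on `(ℤ/2ℤ)⁴` is exactly the
group of translations of `(ℤ/2ℤ)⁴`. -/
theorem statement17 :
    IsColGraphAutGroup gamma17 (translations (ZMod 2 × ZMod 2 × ZMod 2 × ZMod 2)) := by
  intro σ
  have gamma_c : ∀ x y : Stmt17Aux.G17, gamma17 s(x, y) = Stmt17Aux.c17 (x + y) :=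
    fun _ _ => rfl
  constructor
  · intro hσ x y hxy
    obtain ⟨g, rfl⟩ := hσ
    rw [gamma_c, gamma_c]
    simp only [Equiv.coe_addRight]
    rw [(show ∀ x y g : Stmt17Aux.G17, (x + g) + (y + g) = x + y from by decide) x y g]
  · intro h
    set f : Stmt17Aux.G17 → Stmt17Aux.G17 := fun x => σ x + σ 0 with hf
    have hinj : Function.Injective f := by
      intro a b hab
      exact σ.injective (add_right_cancel hab)
    have h0 : f 0 = 0 := by
      simp only [hf]
      exact (show ∀ a : Stmt17Aux.G17, a + a = 0 from by decide) (σ 0)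
    have hc : ∀ x y : Stmt17Aux.G17, x ≠ y → Stmt17Aux.c17 (f x + f y) = Stmt17Aux.c17 (x + y) := by
      intro x y hxy
      have := h x y hxy
      rw [gamma_c, gamma_c] at this
      simp only [hf]
      rw [(show ∀ a b g : Stmt17Aux.G17, (a + g) + (b + g) = a + b from by decide) (σ x) (σ y) (σ 0)]
      exact this
    have key := Stmt17Aux.key17 f hinj h0 hc
    refine ⟨σ 0, Equiv.ext fun x => ?_⟩
    have hx := key x
    simp only [hf] at hx
    simp only [Equiv.coe_addRight]
    exact Stmt17Aux.solve17' _ _ _ hx
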